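/- Let G be a centerless group and A ⊆ G, and suppose that for every ordinal α the centralizer of A in the α-th stage of the automorphism tower is trivial: C_{G^α}(A) = {e}. Then for every ordinal α, the cardinality of G^α is at most |G|^{|A|} + ℵ₀ (cardinal exponentiation and cardinal sum, i.e. max(|G|^{|A|}, ℵ₀)). -/

import Mathlib

universe u

/-- The automorphism tower of a centerless group `G`: an ordinal-indexed increasing
continuous chain of groups, starting at `G`, where each successor stage is (identified
with) the automorphism group of the previous stage via the conjugation embedding. -/
structure AutTower (G : Type u) [Group G] where
  /-- the `o`-th stage `G^o` of the tower -/
  Stage : Ordinal.{u} → GrpCat.{u}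
  /-- the inclusion maps of the tower -/
  map : ∀ ⦃o₁ o₂ : Ordinal.{u}⦄, o₁ ≤ o₂ → (↥(Stage o₁) →* ↥(Stage o₂))
  map_id : ∀ (o : Ordinal.{u}) (x : ↥(Stage o)), map le_rfl x = x
  map_comp : ∀ ⦃o₁ o₂ o₃ : Ordinal.{u}⦄ (h₁ : o₁ ≤ o₂) (h₂ : o₂ ≤ o₃) (x : ↥(Stage o₁)),
      map h₂ (map h₁ x) = map (h₁.trans h₂) x
  map_injective : ∀ ⦃o₁ o₂ : Ordinal.{u}⦄ (h : o₁ ≤ o₂), Function.Injective (map h)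
  /-- the identification of `G` with the `0`-th stage -/
  emb0 : G ≃* ↥(Stage 0)
  /-- the identification of the `(o+1)`-st stage with `Aut(G^o)` -/
  succIso : ∀ o : Ordinal.{u}, ↥(Stage (o + 1)) ≃* MulAut ↥(Stage o)
  /-- under the above identification, the inclusion `G^o ≤ G^{o+1}` is `g ↦` conjugation by `g` -/
  succIso_map : ∀ (o : Ordinal.{u}) (x : ↥(Stage o)),
      succIso o (map (le_self_add : o ≤ o + 1) x) = MulAut.conj x
  /-- at limit stages the tower is continuous: `G^δ = ⋃_{α<δ} G^α` -/
  limit_covers : ∀ (o : Ordinal.{u}), Order.IsSuccLimit o → ∀ x : ↥(Stage o),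
      ∃ (o' : Ordinal.{u}) (h : o' < o), x ∈ Set.range (map h.le)

namespace AutTower

variable {G : Type u} [Group G]

/-- the embedding of `G` into the `o`-th stage of its automorphism tower -/
def embed (T : AutTower G) (o : Ordinal.{u}) : G →* ↥(T.Stage o) :=
  (T.map (zero_le : (0 : Ordinal.{u}) ≤ o)).comp T.emb0.toMonoidHom

/-- `G^{o+1} = G^o`, i.e. the inclusion of stage `o` into stage `o+1` is onto -/
def StabilizesAt (T : AutTower G) (o : Ordinal.{u}) : Prop :=
  Function.Surjective (T.map (le_self_add : o ≤ o + 1))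

end AutTower

/-!
Every element of a stage `G^α` already lives in `G` or in some successor stage `G^{o+1}` with
`o + 1 ≤ α` (at limit stages it comes from an earlier stage). An element `y` of `G^{o+1}` is an
automorphism of `G^o`, and since `C_{G^γ}(A)` is trivial it is determined, as an element of any
later stage `G^γ`, by the values `y(a) ∈ G^o` for `a ∈ A`. Iterating, each element of `G^α` is
coded by a well-founded tree whose leaves are labelled by elements of `G` and whose inner nodes
branch over `A`, and the coding is injective. Such trees form a set of size at most `κ` whenever
`|G| ≤ κ`, `ℵ₀ ≤ κ` and `κ ^ |A| ≤ κ`; for `κ = |G|^{|A|} + ℵ₀` these follow from `|A| ≤ |G|`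
and from `|G| ≤ |G|^{|A|}`, as `g` is determined by its conjugation action on `A`.
-/

open Cardinal

namespace Subgroup

variable {G H : Type*} [Group G] [Group H]

theorem eq_of_forall_conj_eq {S : Set G} (hS : centralizer S = ⊥) {x y : G}
    (h : ∀ s ∈ S, x * s * x⁻¹ = y * s * y⁻¹) : x = y := by
  have hmem : y⁻¹ * x ∈ centralizer S := by
    rw [mem_centralizer_iff]
    intro s hs
    have := h s hs
    calc s * (y⁻¹ * x) = y⁻¹ * (y * s * y⁻¹) * x := by group
      _ = y⁻¹ * (x * s * x⁻¹) * x := by rw [this]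
      _ = y⁻¹ * x * s := by group
  rw [hS, mem_bot, inv_mul_eq_one] at hmem
  exact hmem.symm

theorem centralizer_eq_bot_of_image {f : G →* H} (hf : Function.Injective f) {S : Set G}
    (hS : centralizer (f '' S) = ⊥) : centralizer S = ⊥ := by
  rw [eq_bot_iff]
  intro g hg
  have hfg : f g ∈ centralizer (f '' S) := by
    rintro _ ⟨s, hs, rfl⟩
    rw [← map_mul, ← map_mul, hg s hs]
  rw [hS, mem_bot, ← map_one f] at hfg
  exact hf hfg

end Subgroup

namespace Cardinal

theorem mk_le_mk_pow_of_centralizer_eq_bot {G : Type*} [Group G] {S : Set G}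
    (hS : Subgroup.centralizer S = ⊥) : #G ≤ #G ^ #S := by
  rw [power_def]
  exact mk_le_of_injective (f := fun g (s : S) => g * s * g⁻¹) fun x y hxy =>
    Subgroup.eq_of_forall_conj_eq hS fun s hs => congrFun hxy ⟨s, hs⟩

theorem pow_add_aleph0_pow_le {a b : Cardinal} (hba : b ≤ a) : (a ^ b + ℵ₀) ^ b ≤ a ^ b + ℵ₀ := by
  rcases lt_or_ge b ℵ₀ with hb | hb
  · rcases eq_or_ne b 0 with rfl | hb0
    · simp
    · exact (pow_eq le_add_self (Cardinal.one_le_iff_ne_zero.mpr hb0) hb).le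
  · have ha : ℵ₀ ≤ a ^ b :=
      hb.trans ((cantor b).le.trans (power_le_power_right (ofNat_le_aleph0.trans (hb.trans hba))))
    rw [add_eq_left ha ha, ← power_mul, mul_eq_self hb]

end Cardinal

/-- Shapes of the coding trees: leaves labelled by `G`, inner nodes branching over `A`. -/
def CodeShape (G : Type*) (A : Set G) : Option G → Type _
  | some _ => PEmpty
  | none => A

theorem CodeShape.mk_wType_le {G : Type*} (A : Set G) {κ : Cardinal} (hG : #G ≤ κ)
    (hκ : ℵ₀ ≤ κ) (hA : κ ^ #A ≤ κ) : #(WType (CodeShape G A)) ≤ κ := by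
  refine WType.cardinalMk_le_of_le ?_
  calc (sum fun s => κ ^ #(CodeShape G A s)) ≤ sum fun _ : Option G => κ := by
        refine sum_le_sum _ _ ?_
        rintro (_ | g)
        · exact hA
        · simpa [CodeShape] using one_le_aleph0.trans hκ
    _ = #(Option G) * κ := sum_const' _ _
    _ ≤ κ := by
        rw [mk_option]
        exact mul_le_of_le hκ (add_le_of_le hκ hG (one_le_aleph0.trans hκ)) le_rfl

namespace AutTower

variable {G : Type u} [Group G] (T : AutTower G)

theorem map_embed {o₁ o₂ : Ordinal.{u}} (h : o₁ ≤ o₂) (g : G) :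
    T.map h (T.embed o₁ g) = T.embed o₂ g := by
  simp [embed, T.map_comp]

theorem embed_injective (o : Ordinal.{u}) : Function.Injective (T.embed o) :=
  (T.map_injective _).comp T.emb0.injective

theorem map_mul_embed_mul_inv {o γ : Ordinal.{u}} (h : o + 1 ≤ γ) (y : T.Stage (o + 1))
    (g : G) :
    T.map h y * T.embed γ g * (T.map h y)⁻¹ =
      T.map (le_self_add.trans h) (T.succIso o y (T.embed o g)) := by
  have hsucc : y * T.map le_self_add (T.embed o g) * y⁻¹ =
      T.map le_self_add (T.succIso o y (T.embed o g)) := by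
    apply (T.succIso o).injective
    rw [map_mul, map_mul, map_inv, T.succIso_map, T.succIso_map]
    ext b
    simp [mul_assoc]
  rw [← T.map_embed (le_self_add.trans h), ← T.map_comp le_self_add h, ← map_inv, ← map_mul,
    ← map_mul, hsucc, T.map_comp]

theorem exists_embed_or_map_succ (α : Ordinal.{u}) (x : T.Stage α) :
    (∃ g : G, T.embed α g = x) ∨
      ∃ p : (o : Ordinal.{u}) × T.Stage (o + 1), ∃ h : p.1 + 1 ≤ α, T.map h p.2 = x := by
  induction α using WellFoundedLT.induction with
  | _ α IH =>
  rcases Ordinal.zero_or_succ_or_isSuccLimit α with rfl | ⟨o, ho⟩ | hα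
  · exact Or.inl ⟨T.emb0.symm x, by simp [embed, T.map_id]⟩
  · rw [Order.succ_eq_add_one] at ho
    subst ho
    exact Or.inr ⟨⟨o, x⟩, le_rfl, T.map_id _ x⟩
  · obtain ⟨o, ho, z, rfl⟩ := T.limit_covers α hα x
    rcases IH o ho z with ⟨g, rfl⟩ | ⟨p, hp, rfl⟩
    · exact Or.inl ⟨g, (T.map_embed _ g).symm⟩
    · exact Or.inr ⟨p, hp.trans ho.le, (T.map_comp _ _ _).symm⟩

open Classical in
noncomputable def code (A : Set G) (α : Ordinal.{u}) (x : T.Stage α) :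
    WType (CodeShape G A) :=
  if hx : ∃ g : G, T.embed α g = x then WType.mk (some hx.choose) PEmpty.elim
  else
    have hp := (T.exists_embed_or_map_succ α x).resolve_left hx
    WType.mk none fun a : A =>
      code A hp.choose.1 (T.succIso _ hp.choose.2 (T.embed _ a))
termination_by α
decreasing_by exact Order.add_one_le_iff.1 hp.choose_spec.1

variable {T} {A : Set G}

theorem embed_eq_of_code_eq {α : Ordinal.{u}} {x : T.Stage α} {g : G}
    {f : CodeShape G A (some g) → WType (CodeShape G A)}
    (h : T.code A α x = WType.mk (some g) f) : T.embed α g = x := by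
  rw [code] at h
  split_ifs at h with hx
  · cases h
    exact hx.choose_spec
  · cases h

theorem exists_map_succ_of_code_eq {α : Ordinal.{u}} {x : T.Stage α}
    {f : CodeShape G A none → WType (CodeShape G A)} (h : T.code A α x = WType.mk none f) :
    ∃ p : (o : Ordinal.{u}) × T.Stage (o + 1), ∃ hp : p.1 + 1 ≤ α, T.map hp p.2 = x ∧
      ∀ a : A, T.code A p.1 (T.succIso p.1 p.2 (T.embed p.1 a)) = f a := by
  rw [code] at h
  split_ifs at h with hx
  · cases h
  · cases h
    obtain ⟨hp, hpx⟩ := ((T.exists_embed_or_map_succ α x).resolve_left hx).choose_spec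
    exact ⟨_, hp, hpx, fun _ => rfl⟩

theorem map_eq_map_of_code_eq (hcent : ∀ α, Subgroup.centralizer (T.embed α '' A) = ⊥)
    (w : WType (CodeShape G A)) {α β γ : Ordinal.{u}} (hα : α ≤ γ) (hβ : β ≤ γ)
    {x : T.Stage α} {y : T.Stage β} (hx : T.code A α x = w) (hy : T.code A β y = w) :
    T.map hα x = T.map hβ y := by
  induction w generalizing α β with
  | mk s f ih =>
  cases s with
  | some g =>
    rw [← embed_eq_of_code_eq hx, ← embed_eq_of_code_eq hy, map_embed, map_embed]
  | none =>
    obtain ⟨p, hp, rfl, hpf⟩ := exists_map_succ_of_code_eq hx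
    obtain ⟨q, hq, rfl, hqf⟩ := exists_map_succ_of_code_eq hy
    refine Subgroup.eq_of_forall_conj_eq (hcent γ) ?_
    rintro _ ⟨a, ha, rfl⟩
    rw [T.map_comp, T.map_comp, map_mul_embed_mul_inv, map_mul_embed_mul_inv]
    exact ih ⟨a, ha⟩ _ _ (hpf ⟨a, ha⟩) (hqf ⟨a, ha⟩)

theorem code_injective (hcent : ∀ α, Subgroup.centralizer (T.embed α '' A) = ⊥)
    (α : Ordinal.{u}) : Function.Injective (T.code A α) := fun x y hxy => by
  simpa only [T.map_id] using map_eq_map_of_code_eq hcent _ le_rfl le_rfl hxy rfl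

end AutTower

theorem stage_card_le_of_centralizer_trivial_general {G : Type u} [Group G]
    (A : Set G) (T : AutTower G)
    (hcent : ∀ α : Ordinal.{u}, Subgroup.centralizer (⇑(T.embed α) '' A) = ⊥) :
    ∀ α : Ordinal.{u},
      Cardinal.mk ↥(T.Stage α) ≤ Cardinal.mk G ^ Cardinal.mk ↥A + Cardinal.aleph0 := by
  intro α
  have hG : #G ≤ #G ^ #A := mk_le_mk_pow_of_centralizer_eq_bot
    (Subgroup.centralizer_eq_bot_of_image (T.embed_injective 0) (hcent 0))
  calc #(T.Stage α) ≤ #(WType (CodeShape G A)) := mk_le_of_injective (T.code_injective hcent α)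
    _ ≤ #G ^ #A + ℵ₀ := CodeShape.mk_wType_le A (hG.trans le_self_add) le_add_self
        (pow_add_aleph0_pow_le (mk_set_le A))

/-- If `G` is centerless and for every ordinal `α` the centralizer of `A` in `G^α`
is trivial, `C_{G^α}(A) = {e}` (with `A ⊆ G` regarded as a subset of `G^α` via the
tower embedding), then `|G^α| ≤ |G|^{|A|} + ℵ₀` for every ordinal `α`. -/
theorem stage_card_le_of_centralizer_trivial {G : Type u} [Group G]
    (hG : Subgroup.center G = ⊥) (A : Set G) (T : AutTower G)
    (hcent : ∀ α : Ordinal.{u}, Subgroup.centralizer (⇑(T.embed α) '' A) = ⊥) :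
    ∀ α : Ordinal.{u},
      Cardinal.mk ↥(T.Stage α) ≤ Cardinal.mk G ^ Cardinal.mk ↥A + Cardinal.aleph0 :=
  stage_card_le_of_centralizer_trivial_general A T hcent
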